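/- arXiv:math/0507548 — 6 statements merged into one kernel-verified Lean document; each statement's English description precedes it below -/
import Mathlib

section
/- Let $(l_1,m_1),\dots,(l_r,m_r)$ be $r$ pairs of non-negative integers with $l_i+m_i\ge 1$ for each $i$, and set $l=\sum_i l_i$, $m=\sum_i m_i$. If $l\ge 2$ and $m\ge 2$, then $(l-1)(m-1)-1 \ge \sum_{i=1}^r l_i m_i - \max_{i=1,\dots,r}(l_i+m_i)$. -/
/-!
Write `L = ∑ i, l i` and `M = ∑ i, m i`. If some `j` has `l j ≥ 1` and `m j ≥ 1`, the products
`l i * m i` with `i ≠ j` sum to at most `(L - l j) * (M - m j)`, and `(L - 1) * (M - 1) - 1` exceeds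
`l j * m j + (L - l j) * (M - m j) - (l j + m j)` by `(L - l j) * (m j - 1) + (M - m j) * (l j - 1) ≥ 0`.
Otherwise every product `l i * m i` vanishes, and `(L - 1) * (M - 1) ≥ 1` together with a
nonnegative maximum suffices.
-/

open Finset

section

variable {ι R : Type*}

theorem Finset.sum_mul_le_sum_mul_sum [CommSemiring R] [PartialOrder R] [IsOrderedRing R]
    {s : Finset ι} {f g : ι → R} (hf : ∀ i ∈ s, 0 ≤ f i) (hg : ∀ i ∈ s, 0 ≤ g i) :
    ∑ i ∈ s, f i * g i ≤ (∑ i ∈ s, f i) * ∑ i ∈ s, g i := by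
  rw [sum_mul]
  exact sum_le_sum fun i hi =>
    mul_le_mul_of_nonneg_left (single_le_sum hg hi) (hf i hi)

theorem Finset.sum_mul_sub_le_of_one_le [CommRing R] [PartialOrder R] [IsOrderedRing R]
    [DecidableEq ι] {s : Finset ι} {f g : ι → R} (hf : ∀ i ∈ s, 0 ≤ f i)
    (hg : ∀ i ∈ s, 0 ≤ g i) {j : ι} (hj : j ∈ s) (hfj : 1 ≤ f j) (hgj : 1 ≤ g j) :
    ∑ i ∈ s, f i * g i - (f j + g j) ≤ ((∑ i ∈ s, f i) - 1) * ((∑ i ∈ s, g i) - 1) - 1 := by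
  rw [← add_sum_erase s _ hj, ← add_sum_erase s f hj, ← add_sum_erase s g hj]
  have hf' : ∀ i ∈ s.erase j, 0 ≤ f i := fun i hi => hf i (mem_of_mem_erase hi)
  have hg' : ∀ i ∈ s.erase j, 0 ≤ g i := fun i hi => hg i (mem_of_mem_erase hi)
  have hrest := sum_mul_le_sum_mul_sum hf' hg'
  have hF := mul_nonneg (sum_nonneg hf') (sub_nonneg.mpr hgj)
  have hG := mul_nonneg (sum_nonneg hg') (sub_nonneg.mpr hfj)
  linear_combination hrest + hF + hG

end

theorem stmt_0_general (r : ℕ) (hr : 0 < r) (l m : Fin r → ℕ)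
    (hl : 2 ≤ ∑ i, l i) (hm : 2 ≤ ∑ i, m i) :
    ((∑ i, l i : ℕ) - 1 : ℤ) * ((∑ i, m i : ℕ) - 1) - 1 ≥
      (∑ i, (l i : ℤ) * m i) -
        Finset.univ.sup' (Finset.univ_nonempty_iff.mpr (Fin.pos_iff_nonempty.mp hr))
          (fun i => (l i : ℤ) + m i) := by
  have hL : (2 : ℤ) ≤ ∑ i, (l i : ℤ) := by exact_mod_cast hl
  have hM : (2 : ℤ) ≤ ∑ i, (m i : ℤ) := by exact_mod_cast hm
  have hle_sup (j : Fin r) := le_sup' (fun i => (l i : ℤ) + m i) (mem_univ j)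
  push_cast
  by_cases h : ∃ j, 1 ≤ l j ∧ 1 ≤ m j
  · obtain ⟨j, hlj, hmj⟩ := h
    have key := sum_mul_sub_le_of_one_le (f := fun i => (l i : ℤ)) (g := fun i => (m i : ℤ))
      (fun i _ => by positivity) (fun i _ => by positivity) (mem_univ j)
      (by exact_mod_cast hlj) (by exact_mod_cast hmj)
    linarith [hle_sup j]
  · push Not at h
    have hzero : ∑ i, (l i : ℤ) * m i = 0 :=
      sum_eq_zero fun i _ => by
        rcases Nat.eq_zero_or_pos (l i) with h0 | h0
        · simp [h0]
        · simp [Nat.lt_one_iff.mp (h i h0)]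
    have hsup := hle_sup ⟨0, hr⟩
    rw [hzero]
    nlinarith

theorem stmt_0 (r : ℕ) (hr : 0 < r) (l m : Fin r → ℕ)
    (hlm : ∀ i, 1 ≤ l i + m i)
    (hl : 2 ≤ ∑ i, l i) (hm : 2 ≤ ∑ i, m i) :
    ((∑ i, l i : ℕ) - 1 : ℤ) * ((∑ i, m i : ℕ) - 1) - 1 ≥
      (∑ i, (l i : ℤ) * m i) -
        Finset.univ.sup' (Finset.univ_nonempty_iff.mpr (Fin.pos_iff_nonempty.mp hr))
          (fun i => (l i : ℤ) + m i) :=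
  stmt_0_general r hr l m hl hm
end

section
/- Let $g=\mathrm{diag}(\alpha_1,\dots,\alpha_n)$ be a diagonal matrix over a field $k$ with $s$ distinct eigenvalues $\lambda_1,\dots,\lambda_s$ occurring with multiplicities $l_1,\dots,l_s$. For $\mu\in k^*$ let $V_\mu = \mathrm{Span}(E_{ij} : \alpha_i\alpha_j^{-1}=\mu)\subseteq M_n(k)$. Then $\dim V_1 = l_1^2+\dots+l_s^2$ and for every $\mu\ne 1$, $\dim V_\mu \le \dim V_1$. -/
open Finset

section aux

variable {k : Type*} [Field k] [DecidableEq k] {n : ℕ} (α : Fin n → k)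

/-- number of indices `i` with `α i = x` -/
private def cnt (x : k) : ℕ := (univ.filter fun i => α i = x).card

private lemma finrank_vchar_eq_card (μ : k) :
    Module.finrank k (Submodule.span k
      {M | ∃ i j, α i * (α j)⁻¹ = μ ∧ M = Matrix.single i j (1 : k)}) =
      (Finset.univ.filter fun p : Fin n × Fin n => α p.1 * (α p.2)⁻¹ = μ).card := by
  classical
  set b : {p : Fin n × Fin n // α p.1 * (α p.2)⁻¹ = μ} → Matrix (Fin n) (Fin n) k :=
    fun p => Matrix.single p.1.1 p.1.2 (1 : k) with hbdef
  have h1 : LinearIndependent k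
      (fun p : Fin n × Fin n => Matrix.single p.1 p.2 (1 : k)) := by
    have := (Matrix.stdBasis k (Fin n) (Fin n)).linearIndependent
    have heq : (fun p : Fin n × Fin n => Matrix.single p.1 p.2 (1 : k)) =
        ⇑(Matrix.stdBasis k (Fin n) (Fin n)) := by
      funext p
      rw [show p = (p.1, p.2) from rfl, Matrix.stdBasis_eq_single]
    rw [heq]; exact this
  have hb : LinearIndependent k b := h1.comp Subtype.val Subtype.val_injective
  have hrange : Set.range b =
      {M | ∃ i j, α i * (α j)⁻¹ = μ ∧ M = Matrix.single i j (1 : k)} := by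
    ext M
    constructor
    · rintro ⟨⟨⟨i, j⟩, hp⟩, rfl⟩; exact ⟨i, j, hp, rfl⟩
    · rintro ⟨i, j, h, rfl⟩; exact ⟨⟨(i, j), h⟩, rfl⟩
  rw [← hrange, finrank_span_eq_card hb, Fintype.card_subtype]

private lemma card_pairs (μ : k) (hα : ∀ i, α i ≠ 0) :
    (univ.filter fun p : Fin n × Fin n => α p.1 * (α p.2)⁻¹ = μ).card =
      ∑ x ∈ univ.image α, cnt α x * cnt α (μ * x) := by
  have hcond : (univ.filter fun p : Fin n × Fin n => α p.1 * (α p.2)⁻¹ = μ) =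
      (univ.filter fun p : Fin n × Fin n => α p.1 = μ * α p.2) := by
    apply filter_congr
    intro p _
    rw [mul_inv_eq_iff_eq_mul₀ (hα p.2)]
  rw [hcond]
  rw [Finset.card_eq_sum_card_fiberwise (f := fun p : Fin n × Fin n => p.2)
      (t := univ) (fun p _ => mem_univ _)]
  have hfib : ∀ j : Fin n,
      ((univ.filter fun p : Fin n × Fin n => α p.1 = μ * α p.2).filter
        fun p => p.2 = j).card = cnt α (μ * α j) := by
    intro j
    have : ((univ.filter fun p : Fin n × Fin n => α p.1 = μ * α p.2).filter
        fun p => p.2 = j) = (univ.filter fun i => α i = μ * α j).image fun i => (i, j) := by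
      ext ⟨a, b⟩
      simp only [mem_filter, mem_univ, true_and, mem_image, Prod.mk.injEq]
      constructor
      · rintro ⟨h1, rfl⟩; exact ⟨a, h1, rfl, rfl⟩
      · rintro ⟨i, hi, rfl, rfl⟩; exact ⟨hi, rfl⟩
    rw [this, card_image_of_injective _ (fun a b h => (Prod.mk.injEq _ _ _ _ ▸ h).1)]
    rfl
  simp_rw [hfib]
  rw [Finset.sum_comp (fun x => cnt α (μ * x)) α]
  simp [cnt, mul_comm]

private lemma sq_shift_le (μ : k) (hμ : μ ≠ 0) :
    ∑ x ∈ univ.image α, cnt α (μ * x) ^ 2 ≤ ∑ x ∈ univ.image α, cnt α x ^ 2 := by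
  rw [← Finset.sum_image (g := fun x => μ * x)
      (f := fun y => cnt α y ^ 2)
      (fun x _ y _ h => mul_left_cancel₀ hμ h)]
  apply Finset.sum_le_sum_of_ne_zero
  intro y hy hne
  have hcnt : cnt α y ≠ 0 := by
    intro h0; rw [h0] at hne; simp at hne
  have : (univ.filter fun i => α i = y).Nonempty := card_pos.mp (Nat.pos_of_ne_zero hcnt)
  obtain ⟨i, hi⟩ := this
  simp only [mem_filter] at hi
  exact mem_image.mpr ⟨i, mem_univ _, hi.2⟩

private lemma key_ineq (μ : k) (hα : ∀ i, α i ≠ 0) :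
    2 * ∑ x ∈ univ.image α, cnt α x * cnt α (μ * x) ≤
      2 * ∑ x ∈ univ.image α, cnt α x ^ 2 := by
  rcases eq_or_ne μ 0 with rfl | hμ
  · have h0 : cnt α (0 : k) = 0 := by
      rw [cnt, Finset.card_eq_zero, Finset.filter_eq_empty_iff]
      exact fun i _ => hα i
    simp [h0]
  calc 2 * ∑ x ∈ univ.image α, cnt α x * cnt α (μ * x)
      = ∑ x ∈ univ.image α, 2 * (cnt α x * cnt α (μ * x)) := by rw [Finset.mul_sum]
    _ ≤ ∑ x ∈ univ.image α, (cnt α x ^ 2 + cnt α (μ * x) ^ 2) := by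
        apply Finset.sum_le_sum
        intro x _
        rcases le_total (cnt α x) (cnt α (μ * x)) with h | h <;> nlinarith
    _ = ∑ x ∈ univ.image α, cnt α x ^ 2 + ∑ x ∈ univ.image α, cnt α (μ * x) ^ 2 :=
        Finset.sum_add_distrib
    _ ≤ 2 * ∑ x ∈ univ.image α, cnt α x ^ 2 := by
        have := sq_shift_le α μ hμ
        omega

private lemma sum_sq_eq {s : ℕ} (lam : Fin s → k) (hinj : Function.Injective lam)
    (hsur : ∀ j, ∃ i, α j = lam i) :
    ∑ x ∈ univ.image α, cnt α x ^ 2 = ∑ i : Fin s, cnt α (lam i) ^ 2 := by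
  have hsub : univ.image α ⊆ univ.image lam := by
    intro x hx
    obtain ⟨j, _, rfl⟩ := mem_image.mp hx
    obtain ⟨i, hi⟩ := hsur j
    exact mem_image.mpr ⟨i, mem_univ _, hi.symm⟩
  rw [Finset.sum_subset hsub, Finset.sum_image (fun a _ b _ h => hinj h)]
  intro x hx hnx
  have : cnt α x = 0 := by
    rw [cnt, Finset.card_eq_zero, Finset.filter_eq_empty_iff]
    intro j _ hj
    exact hnx (mem_image.mpr ⟨j, mem_univ _, hj⟩)
  simp [this]

end aux

/-- The character subspace `V_μ` for the conjugation action of the diagonal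
matrix with entries `α` on `M_n(k)`: the span of the matrix units `E i j`
with `α i * (α j)⁻¹ = μ`. -/
def Vchar (k : Type*) [Field k] (n : ℕ) (α : Fin n → k) (μ : k) :
    Submodule k (Matrix (Fin n) (Fin n) k) :=
  Submodule.span k {M | ∃ i j, α i * (α j)⁻¹ = μ ∧ M = Matrix.single i j (1 : k)}

theorem stmt_3 (k : Type*) [Field k] [DecidableEq k] (n s : ℕ)
    (α : Fin n → k) (hα : ∀ i, α i ≠ 0)
    (lam : Fin s → k) (hinj : Function.Injective lam) (hsur : ∀ j, ∃ i, α j = lam i) :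
    Module.finrank k (Vchar k n α 1) =
        ∑ i, ((Finset.univ.filter fun j => α j = lam i).card) ^ 2 ∧
      ∀ μ : k, μ ≠ 1 →
        Module.finrank k (Vchar k n α μ) ≤ Module.finrank k (Vchar k n α 1) := by
  have hrank : ∀ μ : k, Module.finrank k (Vchar k n α μ) =
      ∑ x ∈ univ.image α, cnt α x * cnt α (μ * x) := fun μ => by
    rw [Vchar, finrank_vchar_eq_card, card_pairs α μ hα]
  have hone : Module.finrank k (Vchar k n α 1) = ∑ x ∈ univ.image α, cnt α x ^ 2 := by
    rw [hrank 1]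
    simp [sq]
  constructor
  · rw [hone, sum_sq_eq α lam hinj hsur]
    rfl
  · intro μ _
    rw [hrank μ, hone]
    have := key_ineq α μ hα
    omega
end

section
/- For non-negative integers $m,N$ with $m\le N$, the dimension of the Grassmannian $\mathrm{Gr}(m,N)$ of $m$-dimensional subspaces of an $N$-dimensional vector space equals $(N-m)m$; consequently, if $N=N_1+\dots+N_r$, $m=m_1+\dots+m_r$ with $0\le m_i\le N_i$, the inequality $\dim\mathrm{Gr}(m,N) - \sum_{i=1}^r \dim\mathrm{Gr}(m_i,N_i) \ge N - \max_i N_i$ holds whenever $2\le m\le N-2$ and each $N_i\ge 1$. -/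
/-!
Write `lᵢ = Nᵢ - mᵢ`, `L = ∑ lᵢ`, `M = ∑ mᵢ`. The left-hand side is
`L M - ∑ lᵢ mᵢ = ∑ᵢ lᵢ (M - mᵢ)`. If some block `j` has `l_j, m_j ≥ 1`, the terms pairing
`j` with the other blocks alone give
`l_j (M - m_j) + (L - l_j) m_j ≥ (L - l_j) + (M - m_j) = N - N_j`. Otherwise every
`lᵢ mᵢ` vanishes and `L M ≥ L + M` because `L, M ≥ 2`.
-/

/-- The dimension of the Grassmannian `Gr(a, b)` of `a`-dimensional subspaces of a
`b`-dimensional vector space, namely `(b - a) * a`. -/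
def grDim (a b : ℕ) : ℤ := ((b : ℤ) - a) * a

open Finset

section

variable {ι : Type*} [Fintype ι] {l m : ι → ℤ}

lemma add_le_sum_of_ne (hm : ∀ i, 0 ≤ m i) {i j : ι} (hij : i ≠ j) :
    m i + m j ≤ ∑ k, m k := by
  classical
  rw [← sum_pair hij]
  exact sum_le_univ_sum_of_nonneg hm

lemma mul_sub_add_sub_mul_le (hl : ∀ i, 0 ≤ l i) (hm : ∀ i, 0 ≤ m i) (j : ι) :
    l j * (∑ i, m i - m j) + (∑ i, l i - l j) * m j ≤
      (∑ i, l i) * (∑ i, m i) - ∑ i, l i * m i := by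
  classical
  calc l j * (∑ i, m i - m j) + (∑ i, l i - l j) * m j
      = l j * (∑ i, m i - m j) + ∑ i ∈ univ.erase j, l i * m j := by
        rw [← sum_mul, sum_erase_eq_sub (mem_univ j)]
    _ ≤ l j * (∑ i, m i - m j) + ∑ i ∈ univ.erase j, l i * (∑ k, m k - m i) := by
        gcongr with i hi
        · exact hl i
        · linarith [add_le_sum_of_ne hm (ne_of_mem_erase hi)]
    _ = ∑ i, l i * (∑ k, m k - m i) :=
        add_sum_erase _ (fun i => l i * (∑ k, m k - m i)) (mem_univ j)
    _ = (∑ i, l i) * (∑ i, m i) - ∑ i, l i * m i := by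
        simp only [mul_sub, sum_sub_distrib, sum_mul]

lemma exists_sum_add_sum_sub_le [Nonempty ι] (hl : ∀ i, 0 ≤ l i) (hm : ∀ i, 0 ≤ m i)
    (hL : 2 ≤ ∑ i, l i) (hM : 2 ≤ ∑ i, m i) :
    ∃ j, ∑ i, l i + ∑ i, m i - (l j + m j) ≤
      (∑ i, l i) * (∑ i, m i) - ∑ i, l i * m i := by
  by_cases h : ∃ j, 1 ≤ l j ∧ 1 ≤ m j
  · obtain ⟨j, hlj, hmj⟩ := h
    refine ⟨j, le_trans ?_ (mul_sub_add_sub_mul_le hl hm j)⟩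
    have hmj' : m j ≤ ∑ i, m i := single_le_sum (fun i _ => hm i) (mem_univ j)
    have hlj' : l j ≤ ∑ i, l i := single_le_sum (fun i _ => hl i) (mem_univ j)
    nlinarith
  · push Not at h
    have hdiag : ∑ i, l i * m i = 0 := sum_eq_zero fun i _ => by
      rcases (hl i).eq_or_lt with h0 | h0
      · simp [← h0]
      · simp [le_antisymm (Int.lt_add_one_iff.mp (h i h0)) (hm i)]
    obtain ⟨j⟩ := ‹Nonempty ι›
    refine ⟨j, ?_⟩
    rw [hdiag]
    nlinarith [hl j, hm j, mul_nonneg (sub_nonneg.mpr hL) (sub_nonneg.mpr hM)]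

end

theorem stmt_5_general (r : ℕ) (hr : 0 < r) (N m : Fin r → ℕ)
    (hmN : ∀ i, m i ≤ N i)
    (h2 : 2 ≤ ∑ i, m i) (h3 : (∑ i, m i) + 2 ≤ ∑ i, N i) :
    grDim (∑ i, m i) (∑ i, N i) - ∑ i, grDim (m i) (N i) ≥
      (∑ i, (N i : ℤ)) -
        Finset.univ.sup' (Finset.univ_nonempty_iff.mpr (Fin.pos_iff_nonempty.mp hr))
          (fun i => (N i : ℤ)) := by
  have : Nonempty (Fin r) := Fin.pos_iff_nonempty.mp hr
  set l : Fin r → ℤ := fun i => N i - m i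
  have hl i : 0 ≤ l i := sub_nonneg.mpr (Nat.cast_le.mpr (hmN i))
  have hN i : (N i : ℤ) = l i + m i := by simp [l]
  have hsum : ∑ i, (N i : ℤ) = ∑ i, l i + ∑ i, (m i : ℤ) := by
    simp only [hN, sum_add_distrib]
  have hgr : grDim (∑ i, m i) (∑ i, N i) = (∑ i, l i) * ∑ i, (m i : ℤ) := by
    simp only [grDim, Nat.cast_sum, hsum, add_sub_cancel_right]
  have hblocks : ∑ i, grDim (m i) (N i) = ∑ i, l i * m i := rfl
  obtain ⟨j, hj⟩ := exists_sum_add_sum_sub_le hl (fun i => Nat.cast_nonneg (m i))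
    (by linarith [show ((∑ i, m i + 2 : ℕ) : ℤ) ≤ ∑ i, N i by exact_mod_cast h3])
    (by exact_mod_cast h2)
  have hsup : (N j : ℤ) ≤ univ.sup' _ fun i => (N i : ℤ) :=
    le_sup' (fun i => (N i : ℤ)) (mem_univ j)
  rw [ge_iff_le, hgr, hblocks, hsum]
  linarith [hN j]

theorem stmt_5 (r : ℕ) (hr : 0 < r) (N m : Fin r → ℕ)
    (hN : ∀ i, 1 ≤ N i) (hmN : ∀ i, m i ≤ N i)
    (h2 : 2 ≤ ∑ i, m i) (h3 : (∑ i, m i) + 2 ≤ ∑ i, N i) :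
    grDim (∑ i, m i) (∑ i, N i) - ∑ i, grDim (m i) (N i) ≥
      (∑ i, (N i : ℤ)) -
        Finset.univ.sup' (Finset.univ_nonempty_iff.mpr (Fin.pos_iff_nonempty.mp hr))
          (fun i => (N i : ℤ)) :=
  stmt_5_general r hr N m hmN h2 h3
end

section
/- Let $k$ be a field of characteristic $\ne 2$, $n\ge 2$, and $2\le m=2r-2\le 2n-2$ with $1<r\le n$. Evaluate the standard polynomial $F_m$ at the $m$ matrix units $e_{1,2},e_{2,2},e_{2,3},e_{3,3},\dots,e_{r-2,r-1},e_{r-1,r-1},e_{r-1,r},e_{r,1}$ in $M_n(k)$. The result is $e_{1,1}-e_{r,r}$, a matrix having $1$ as an eigenvalue of multiplicity one. -/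
set_option maxHeartbeats 4000000


/-- Evaluation of the standard polynomial `F_m` at elements `x_1, …, x_m` of a ring. -/
def stdEval {A : Type*} [Ring A] (m : ℕ) (x : Fin m → A) : A :=
  ∑ σ : Equiv.Perm (Fin m),
    (Equiv.Perm.sign σ : ℤ) • (List.ofFn fun i => x (σ i)).prod

/-- The sequence of `m = 2r-2` matrix units
`e_{1,2}, e_{2,2}, e_{2,3}, e_{3,3}, …, e_{r-1,r-1}, e_{r-1,r}, e_{r,1}`
(written here with 0-based indices) in `M_n(k)`. -/
def unitSeq (k : Type*) [Field k] (n r : ℕ) (h1 : 1 < r) (h2 : r ≤ n) :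
    Fin (2 * r - 2) → Matrix (Fin n) (Fin n) k := fun t => by
  have ht := t.isLt
  exact
    if (t : ℕ) = 2 * r - 3 then
      Matrix.single ⟨r - 1, by omega⟩ ⟨0, by omega⟩ 1
    else if (t : ℕ) % 2 = 0 then
      Matrix.single ⟨(t : ℕ) / 2, by omega⟩ ⟨(t : ℕ) / 2 + 1, by omega⟩ 1
    else
      Matrix.single ⟨((t : ℕ) + 1) / 2, by omega⟩ ⟨((t : ℕ) + 1) / 2, by omega⟩ 1


open Matrix Polynomial

section Aux
variable {k : Type*} [Field k] {n : ℕ}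

lemma prod_stdBasis (l : List (Fin n × Fin n)) (hl : l ≠ []) :
    (l.map fun p => Matrix.single p.1 p.2 (1:k)).prod =
      if List.IsChain (fun p q => p.2 = q.1) l then
        Matrix.single (l.head hl).1 (l.getLast hl).2 1 else 0 := by
  induction l with
  | nil => simp at hl
  | cons p t ih =>
    cases t with
    | nil => simp
    | cons q s =>
      rw [List.map_cons, List.prod_cons, ih (by simp), List.getLast_cons_cons,
        List.head_cons]
      by_cases hc : List.IsChain (fun p q => p.2 = q.1) (q :: s)
      · rw [if_pos hc]
        simp only [List.head_cons]
        by_cases hpq : p.2 = q.1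
        · rw [if_pos (by rw [List.isChain_cons_cons]; exact ⟨hpq, hc⟩)]
          rw [hpq, Matrix.single_mul_single_same, one_mul]
        · rw [if_neg (by rw [List.isChain_cons_cons]; exact fun h => hpq h.1),
            Matrix.single_mul_single_of_ne (h := hpq)]
      · rw [if_neg hc, if_neg (by rw [List.isChain_cons_cons]; exact fun h => hc h.2), mul_zero]

/-- row index (0-based) of the `j`-th unit. -/
def rwN (r j : ℕ) : ℕ := if j = 2*r-3 then r-1 else (j+1)/2
/-- column index (0-based) of the `j`-th unit. -/
def clN (r j : ℕ) : ℕ := if j = 2*r-3 then 0 else j/2+1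

lemma cyc {r : ℕ} (h1 : 1 < r) {j : ℕ} (hj : j < 2*r-2) :
    clN r j = rwN r ((j+1) % (2*r-2)) := by
  rcases eq_or_ne (j+1) (2*r-2) with h | h
  · rw [h, Nat.mod_self]; unfold clN rwN; split_ifs <;> omega
  · rw [Nat.mod_eq_of_lt (by omega)]; unfold clN rwN; split_ifs <;> omega

lemma fiber {r : ℕ} (h1 : 1 < r) {s t : ℕ} (hs : s < 2*r-2) (ht : t < 2*r-2)
    (h : rwN r s = rwN r t) :
    s = t ∨ (s = t+1 ∧ t % 2 = 1) ∨ (t = s+1 ∧ s % 2 = 1) := by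
  unfold rwN at h; split_ifs at h <;> omega

lemma core {r : ℕ} (h1 : 1 < r) (σ : Equiv.Perm (Fin (2*r-2)))
    (h : ∀ i (hi : i + 1 < 2*r-2),
      clN r (σ ⟨i, by omega⟩).val = rwN r (σ ⟨i+1, hi⟩).val) :
    ∀ i (hi : i < 2*r-2),
      (σ ⟨i, hi⟩).val = ((σ ⟨0, by omega⟩).val + i) % (2*r-2) := by
  have injv : ∀ a b (ha : a < 2*r-2) (hb : b < 2*r-2),
      (σ ⟨a, ha⟩).val = (σ ⟨b, hb⟩).val → a = b := by
    intro a b ha hb hab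
    simpa using congrArg Fin.val (σ.injective (Fin.ext hab))
  have surj : ∀ v (hv : v < 2*r-2), ∃ q, ∃ (hq : q < 2*r-2), (σ ⟨q, hq⟩).val = v := by
    intro v hv
    refine ⟨(σ.symm ⟨v, hv⟩).val, (σ.symm ⟨v, hv⟩).isLt, ?_⟩
    rw [Fin.eta, Equiv.apply_symm_apply]
  have hmod : ∀ x, x < 2*r-2 →
      ((x+1) % (2*r-2) = 0 ∧ x + 1 = 2*r-2) ∨ (x+1) % (2*r-2) = x+1 := by
    intro x hx
    rcases eq_or_ne (x+1) (2*r-2) with hh | hh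
    · exact Or.inl ⟨by rw [hh, Nat.mod_self], hh⟩
    · exact Or.inr (Nat.mod_eq_of_lt (by omega))
  intro i
  induction i with
  | zero =>
    intro hi
    rw [Nat.add_zero, Nat.mod_eq_of_lt (σ ⟨0, hi⟩).isLt]
  | succ i ih =>
    intro hi
    have hii : i < 2*r-2 := by omega
    have ht : (σ ⟨i, hii⟩).val = ((σ ⟨0, by omega⟩).val + i) % (2*r-2) := ih hii
    have hchain : clN r (σ ⟨i, hii⟩).val = rwN r (σ ⟨i+1, hi⟩).val := h i hi
    have htlt : (σ ⟨i, hii⟩).val < 2*r-2 := (σ ⟨i, hii⟩).isLt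
    have hult : (σ ⟨i+1, hi⟩).val < 2*r-2 := (σ ⟨i+1, hi⟩).isLt
    have hcyc := cyc h1 htlt
    have hf := fiber h1 (Nat.mod_lt _ (by omega : 0 < 2*r-2)) hult
      (hcyc.symm.trans hchain)
    have hgoal : ((σ ⟨0, by omega⟩).val + (i+1)) % (2*r-2)
        = ((σ ⟨i, hii⟩).val + 1) % (2*r-2) := by
      rw [← Nat.add_assoc, ← Nat.mod_add_mod, ← ht]
    rw [hgoal]
    have hm1 := hmod _ htlt
    rcases hf with hf | ⟨hf1, hf2⟩ | ⟨hf1, hf2⟩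
    · exact hf.symm
    · -- (t+1)%m = u+1 : forces t = u, contradiction with injectivity
      exact absurd (injv i (i+1) hii hi (by omega)) (by omega)
    · -- skip case : u = (t+1)%m + 1 and (t+1)%m odd
      exfalso
      have hvlt : ((σ ⟨i, hii⟩).val + 1) % (2*r-2) < 2*r-2 :=
        Nat.mod_lt _ (by omega)
      obtain ⟨q, hq, hqv⟩ := surj _ hvlt
      rcases eq_or_ne q 0 with hq0 | hq0
      · subst hq0
        have h0 : clN r (σ ⟨0, hq⟩).val = rwN r (σ ⟨1, by omega⟩).val :=
          h 0 (by omega)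
        have hwlt : (σ ⟨1, by omega⟩).val < 2*r-2 := (σ ⟨1, by omega⟩).isLt
        have hcyc0 := cyc h1 (hqv ▸ hvlt : (σ ⟨0, hq⟩).val < 2*r-2)
        have hf0 := fiber h1 (Nat.mod_lt _ (by omega : 0 < 2*r-2)) hwlt
          (hcyc0.symm.trans h0)
        have hm0 := hmod _ (hqv ▸ hvlt : (σ ⟨0, hq⟩).val < 2*r-2)
        rcases hf0 with hf0 | ⟨hg1, hg2⟩ | ⟨hg1, hg2⟩
        · -- σ 1 has value u : so 1 = i+1, i = 0
          have h1u : (1 : ℕ) = i + 1 := injv 1 (i+1) (by omega) hi (by omega)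
          have hi0 : i = 0 := by omega
          subst hi0
          have : (σ ⟨0, hii⟩).val = (σ ⟨0, hq⟩).val := rfl
          omega
        · -- σ 1 has value v = value of σ 0
          exact absurd (injv 1 0 (by omega) hq (by omega)) (by omega)
        · omega
      · -- q ≥ 1
        have hpred : clN r (σ ⟨q-1, by omega⟩).val
            = rwN r (σ ⟨q-1+1, by omega⟩).val := h (q-1) (by omega)
        have hbr : (σ ⟨q-1+1, by omega⟩).val = (σ ⟨q, hq⟩).val :=
          congrArg Fin.val (congrArg σ (Fin.ext (show q - 1 + 1 = q by omega)))
        have hplt : (σ ⟨q-1, by omega⟩).val < 2*r-2 := (σ ⟨q-1, by omega⟩).isLt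
        have hcycp := cyc h1 hplt
        have hfp := fiber h1 (Nat.mod_lt _ (by omega : 0 < 2*r-2)) hvlt
          (hcycp.symm.trans (hpred.trans (by rw [hbr, hqv])))
        have hmp := hmod _ hplt
        rcases hfp with hfp | ⟨hg1, hg2⟩ | ⟨hg1, hg2⟩
        · -- (p+1)%m = v = (t+1)%m, so p = t, so q = i+1
          have hpt : (σ ⟨q-1, by omega⟩).val = (σ ⟨i, hii⟩).val := by omega
          have : q - 1 = i := injv (q-1) i (by omega) hii hpt
          have hqi : q = i + 1 := by omega
          subst hqi
          have : (σ ⟨i+1, hq⟩).val = (σ ⟨i+1, hi⟩).val := rfl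
          omega
        · -- p = v, so σ (q-1) = σ q
          exact absurd (injv (q-1) q (by omega) hq (by omega)) (by omega)
        · omega

open Fin.NatCast in
lemma addLeft_eq_pow_finRotate {M : ℕ} [NeZero M] (j : Fin M) :
    (Equiv.addLeft j : Equiv.Perm (Fin M)) = (finRotate M) ^ j.val := by
  obtain ⟨M', rfl⟩ := Nat.exists_eq_succ_of_ne_zero (NeZero.ne M)
  have H : ∀ v : ℕ, (finRotate (M'+1)) ^ v = Equiv.addLeft ((v : Fin (M'+1))) := by
    intro v
    induction v with
    | zero => ext i; simp
    | succ v ih =>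
      ext i
      rw [pow_succ']
      simp only [Equiv.Perm.mul_apply, finRotate_succ_apply, ih, Equiv.coe_addLeft]
      push_cast
      rw [add_right_comm]
  rw [H j.val, Fin.cast_val_eq_self]

lemma sign_rot {M : ℕ} [NeZero M] (hM : M % 2 = 0) (j : Fin M) :
    Equiv.Perm.sign (Equiv.addLeft j : Equiv.Perm (Fin M)) = (-1) ^ j.val := by
  rw [addLeft_eq_pow_finRotate, map_pow]
  obtain ⟨M', rfl⟩ := Nat.exists_eq_succ_of_ne_zero (NeZero.ne M)
  have hodd : Odd M' := Nat.odd_iff.mpr (by omega)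
  rw [sign_finRotate, Nat.succ_sub_one, hodd.neg_one_pow]

end Aux

lemma final_sum (k : Type*) [Field k] {r n : ℕ} (h1 : 1 < r) (h2 : r ≤ n) :
    ∑ v ∈ Finset.range (2*r-2), ((-1:ℤ))^v •
      Matrix.single (⟨rwN r v % n, Nat.mod_lt _ (by omega)⟩ : Fin n)
        (⟨rwN r v % n, Nat.mod_lt _ (by omega)⟩ : Fin n) (1:k)
    = Matrix.single (⟨0, by omega⟩ : Fin n) (⟨0, by omega⟩ : Fin n) 1 -
      Matrix.single ⟨r-1, by omega⟩ (⟨r-1, by omega⟩ : Fin n) 1 := by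
  have hn : 0 < n := by omega
  have hm : 2*r-2 = (2*r-3)+1 := by omega
  rw [hm, Finset.sum_range_succ, Finset.range_eq_Ico,
    Finset.sum_eq_sum_Ico_succ_bot (by omega : 0 < 2*r-3)]
  have hmid : (∑ v ∈ Finset.Ico 1 (2*r-3), ((-1:ℤ))^v •
      Matrix.single (⟨rwN r v % n, Nat.mod_lt _ (by omega)⟩ : Fin n)
        (⟨rwN r v % n, Nat.mod_lt _ (by omega)⟩ : Fin n) (1:k)) = 0 := by
    apply Finset.sum_involution (g := fun a _ => if a % 2 = 1 then a + 1 else a - 1)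
    · intro a ha
      simp only [Finset.mem_Ico] at ha
      by_cases hp : a % 2 = 1
      · simp only [if_pos hp]
        have hE : Matrix.single (⟨rwN r (a+1) % n, Nat.mod_lt _ (by omega)⟩ : Fin n)
            (⟨rwN r (a+1) % n, Nat.mod_lt _ (by omega)⟩ : Fin n) (1:k)
            = Matrix.single (⟨rwN r a % n, Nat.mod_lt _ (by omega)⟩ : Fin n)
              (⟨rwN r a % n, Nat.mod_lt _ (by omega)⟩ : Fin n) (1:k) := by
          have h' : rwN r (a+1) = rwN r a := by unfold rwN; split_ifs <;> omega
          congr 2 <;> rw [h']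
        rw [hE, ← add_smul]
        have h0 : ((-1:ℤ))^a + ((-1:ℤ))^(a+1) = 0 := by
          rw [pow_succ, mul_neg_one]; exact add_neg_cancel _
        rw [h0, zero_smul]
      · simp only [if_neg hp]
        have ha1 : a - 1 + 1 = a := by omega
        have hE : Matrix.single (⟨rwN r (a-1) % n, Nat.mod_lt _ (by omega)⟩ : Fin n)
            (⟨rwN r (a-1) % n, Nat.mod_lt _ (by omega)⟩ : Fin n) (1:k)
            = Matrix.single (⟨rwN r a % n, Nat.mod_lt _ (by omega)⟩ : Fin n)
              (⟨rwN r a % n, Nat.mod_lt _ (by omega)⟩ : Fin n) (1:k) := by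
          have h' : rwN r (a-1) = rwN r a := by unfold rwN; split_ifs <;> omega
          congr 2 <;> rw [h']
        rw [hE, ← add_smul]
        have h0 : ((-1:ℤ))^a + ((-1:ℤ))^(a-1) = 0 := by
          conv_lhs => rw [← ha1, pow_succ, mul_neg_one]
          exact neg_add_cancel _
        rw [h0, zero_smul]
    · intro a ha _
      simp only [Finset.mem_Ico] at ha
      split_ifs <;> omega
    · intro a ha
      simp only [Finset.mem_Ico] at ha
      split_ifs <;> omega
    · intro a ha
      simp only [Finset.mem_Ico] at ha ⊢
      split_ifs <;> omega
  rw [hmid, add_zero]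
  have hr0 : rwN r 0 % n = 0 := by
    have : rwN r 0 = 0 := by unfold rwN; split_ifs <;> omega
    rw [this, Nat.zero_mod]
  have hrl : rwN r (2*r-3) % n = r - 1 := by
    have : rwN r (2*r-3) = r - 1 := by unfold rwN; split_ifs <;> omega
    rw [this, Nat.mod_eq_of_lt (by omega)]
  have hodd : Odd (2*r-3) := ⟨r-2, by omega⟩
  rw [hodd.neg_one_pow, pow_zero, one_smul, neg_smul, one_smul, ← sub_eq_add_neg]
  have hcg : ∀ (a b : Fin n), a = b → Matrix.single a a (1:k) = Matrix.single b b 1 :=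
    fun a b hab => by rw [hab]
  congr 1
  · exact hcg _ _ (Fin.ext hr0)
  · exact hcg _ _ (Fin.ext hrl)

lemma part2 (k : Type*) [Field k] (h2k : (2 : k) ≠ 0) {r n : ℕ}
    (h1 : 1 < r) (h2 : r ≤ n) :
    Polynomial.rootMultiplicity 1
      (Matrix.charpoly
        (Matrix.single (⟨0, by omega⟩ : Fin n) ⟨0, by omega⟩ (1 : k) -
          Matrix.single ⟨r - 1, by omega⟩ ⟨r - 1, by omega⟩ 1)) = 1 := by
  classical
  have hn : 0 < n := by omega
  set d : Fin n → k := fun i => if i.val = 0 then 1 else if i.val = r-1 then -1 else 0 with hd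
  have hD : Matrix.single (⟨0, by omega⟩ : Fin n) ⟨0, by omega⟩ (1 : k) -
      Matrix.single ⟨r - 1, by omega⟩ ⟨r - 1, by omega⟩ 1 = Matrix.diagonal d := by
    ext i j
    simp only [Matrix.sub_apply, Matrix.single, Matrix.of_apply,
      Matrix.diagonal_apply, hd, Fin.ext_iff]
    split_ifs <;> simp_all <;> omega
  rw [hD]
  have hchar : (Matrix.diagonal d).charpoly = ∏ i : Fin n, (X - C (d i)) := by
    rw [Matrix.charpoly]
    have hc : Matrix.charmatrix (Matrix.diagonal d)
        = Matrix.diagonal fun i => (X - C (d i)) := by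
      ext i j
      rcases eq_or_ne i j with rfl | hij
      · rw [Matrix.charmatrix_apply_eq, Matrix.diagonal_apply_eq, Matrix.diagonal_apply_eq]
      · rw [Matrix.charmatrix_apply_ne _ _ _ hij, Matrix.diagonal_apply_ne _ hij,
          Matrix.diagonal_apply_ne _ hij, map_zero, neg_zero]
    rw [hc, Matrix.det_diagonal]
  rw [hchar]
  have hprod : ∏ i : Fin n, (X - C (d i)) =
      (Multiset.map (fun a => X - C a) (Finset.univ.val.map d)).prod := by
    rw [Multiset.map_map]
    rfl
  rw [hprod, ← Polynomial.count_roots, Polynomial.roots_multiset_prod_X_sub_C,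
    Multiset.count_map]
  have hfil : Finset.univ.filter (fun a : Fin n => (1:k) = d a) = {(⟨0, hn⟩ : Fin n)} := by
    ext a
    simp only [Finset.mem_filter, Finset.mem_univ, true_and, Finset.mem_singleton, hd]
    constructor
    · intro ha
      by_cases h0 : a.val = 0
      · exact Fin.ext h0
      · rw [if_neg h0] at ha
        by_cases hr : a.val = r-1
        · rw [if_pos hr] at ha
          exact absurd (by linear_combination ha : (2:k) = 0) h2k
        · rw [if_neg hr] at ha
          exact absurd ha one_ne_zero
    · rintro rfl
      simp
  rw [← Finset.filter_val, hfil]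
  simp

lemma part1 (k : Type*) [Field k] (r n : ℕ) (h1 : 1 < r) (h2 : r ≤ n) :
    stdEval (2 * r - 2) (unitSeq k n r h1 h2) =
      Matrix.single (⟨0, by omega⟩ : Fin n) ⟨0, by omega⟩ (1 : k) -
        Matrix.single ⟨r - 1, by omega⟩ ⟨r - 1, by omega⟩ 1 := by
  classical
  haveI : NeZero (2*r-2) := ⟨by omega⟩
  have hn : 0 < n := by omega
  have hbound : ∀ j, j < 2*r-2 → rwN r j < n ∧ clN r j < n := by
    intro j hj; unfold rwN clN; constructor <;> split_ifs <;> omega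
  set pairF : Fin (2*r-2) → Fin n × Fin n :=
    (fun t => (⟨rwN r t.val % n, Nat.mod_lt _ hn⟩, ⟨clN r t.val % n, Nat.mod_lt _ hn⟩))
    with hpairF
  have hunit : ∀ t, unitSeq k n r h1 h2 t =
      Matrix.single (pairF t).1 (pairF t).2 1 := by
    intro t
    have htlt := t.isLt
    obtain ⟨hb1, hb2⟩ := hbound t.val htlt
    have e1 : rwN r t.val % n = rwN r t.val := Nat.mod_eq_of_lt hb1
    have e2 : clN r t.val % n = clN r t.val := Nat.mod_eq_of_lt hb2
    have hcg : ∀ (a b a' b' : Fin n), a = a' → b = b' →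
        Matrix.single a b (1:k) = Matrix.single a' b' 1 := by
      rintro a b a' b' rfl rfl; rfl
    simp only [unitSeq, hpairF]
    split_ifs with hA hB
    · have v1 : rwN r t.val % n = r - 1 := by
        rw [e1]; unfold rwN; rw [if_pos hA]
      have v2 : clN r t.val % n = 0 := by
        rw [e2]; unfold clN; rw [if_pos hA]
      exact hcg _ _ _ _ (Fin.ext v1.symm) (Fin.ext v2.symm)
    · have v1 : rwN r t.val % n = t.val / 2 := by
        rw [e1]; unfold rwN; rw [if_neg hA]; omega
      have v2 : clN r t.val % n = t.val / 2 + 1 := by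
        rw [e2]; unfold clN; rw [if_neg hA]
      exact hcg _ _ _ _ (Fin.ext v1.symm) (Fin.ext v2.symm)
    · have v1 : rwN r t.val % n = (t.val + 1) / 2 := by
        rw [e1]; unfold rwN; rw [if_neg hA]
      have v2 : clN r t.val % n = (t.val + 1) / 2 := by
        rw [e2]; unfold clN; rw [if_neg hA]; omega
      exact hcg _ _ _ _ (Fin.ext v1.symm) (Fin.ext v2.symm)
  have hprod : ∀ σ : Equiv.Perm (Fin (2*r-2)),
      (List.ofFn fun i => unitSeq k n r h1 h2 (σ i)).prod =
        if List.IsChain (fun p q => p.2 = q.1) (List.ofFn fun i => pairF (σ i)) then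
          Matrix.single (pairF (σ ⟨0, by omega⟩)).1
            (pairF (σ ⟨2*r-2-1, by omega⟩)).2 1
        else 0 := by
    intro σ
    have hne : (List.ofFn fun i => pairF (σ i)) ≠ [] := by
      simp only [ne_eq, List.ofFn_eq_nil_iff]
      omega
    have hlist : (List.ofFn fun i => unitSeq k n r h1 h2 (σ i))
        = (List.ofFn fun i => pairF (σ i)).map fun p => Matrix.single p.1 p.2 (1:k) := by
      rw [List.map_ofFn]
      exact congrArg List.ofFn (funext fun i => hunit (σ i))
    rw [hlist, prod_stdBasis _ hne, List.head_ofFn, List.getLast_ofFn]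
  have hchain_iff : ∀ σ : Equiv.Perm (Fin (2*r-2)),
      List.IsChain (fun p q => p.2 = q.1) (List.ofFn fun i => pairF (σ i)) ↔
      (∀ i (hi : i + 1 < 2*r-2),
        clN r (σ ⟨i, by omega⟩).val = rwN r (σ ⟨i+1, hi⟩).val) := by
    intro σ
    rw [List.isChain_ofFn]
    constructor
    · intro H i hi
      have hv := congrArg Fin.val (H i hi)
      simp only [hpairF] at hv
      rw [Nat.mod_eq_of_lt (hbound _ (σ _).isLt).2,
        Nat.mod_eq_of_lt (hbound _ (σ _).isLt).1] at hv
      exact hv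
    · intro H i hi
      apply Fin.ext
      simp only [hpairF]
      rw [H i hi]
  have rot_chain : ∀ j : Fin (2*r-2), ∀ i, ∀ (hi : i + 1 < 2*r-2),
      clN r ((Equiv.addLeft j : Equiv.Perm (Fin (2*r-2))) ⟨i, by omega⟩).val
        = rwN r ((Equiv.addLeft j : Equiv.Perm (Fin (2*r-2))) ⟨i+1, hi⟩).val := by
    intro j i hi
    simp only [Equiv.coe_addLeft]
    rw [Fin.add_def, Fin.add_def]
    show clN r ((j.val + i) % (2*r-2)) = rwN r ((j.val + (i+1)) % (2*r-2))
    rw [cyc h1 (Nat.mod_lt (j.val + i) (by omega)), Nat.mod_add_mod, Nat.add_assoc]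
  have hrot_eq : ∀ σ : Equiv.Perm (Fin (2*r-2)),
      (∀ i (hi : i + 1 < 2*r-2),
        clN r (σ ⟨i, by omega⟩).val = rwN r (σ ⟨i+1, hi⟩).val) →
      σ = Equiv.addLeft (σ ⟨0, by omega⟩) := by
    intro σ H
    ext x
    have hc := core h1 σ H x.val x.isLt
    rw [Fin.eta] at hc
    simp only [Equiv.coe_addLeft]
    rw [Fin.val_add]
    exact hc
  have hrot_inj : Function.Injective
      fun j : Fin (2*r-2) => (Equiv.addLeft j : Equiv.Perm (Fin (2*r-2))) := by
    intro a b hab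
    have := congrArg (fun e : Equiv.Perm (Fin (2*r-2)) => e 0) hab
    simpa using this
  unfold stdEval
  rw [← Finset.sum_subset (Finset.subset_univ ((Finset.univ : Finset (Fin (2*r-2))).image
      fun j => (Equiv.addLeft j : Equiv.Perm (Fin (2*r-2)))))
    (fun σ _ hσ => by
      rw [hprod, if_neg, smul_zero]
      intro hc
      exact hσ (Finset.mem_image.mpr ⟨σ ⟨0, by omega⟩, Finset.mem_univ _,
        (hrot_eq σ ((hchain_iff σ).mp hc)).symm⟩))]
  rw [Finset.sum_image (fun a _ b _ h => hrot_inj h)]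
  have hterm : ∀ j : Fin (2*r-2),
      ((Equiv.Perm.sign (Equiv.addLeft j : Equiv.Perm (Fin (2*r-2)))) : ℤ) •
        (List.ofFn fun i => unitSeq k n r h1 h2 ((Equiv.addLeft j) i)).prod
      = ((-1:ℤ))^(j.val) • Matrix.single
          (⟨rwN r j.val % n, Nat.mod_lt _ hn⟩ : Fin n)
          ⟨rwN r j.val % n, Nat.mod_lt _ hn⟩ (1:k) := by
    intro j
    rw [hprod, if_pos ((hchain_iff _).mpr (rot_chain j))]
    have hsgn : ((Equiv.Perm.sign (Equiv.addLeft j : Equiv.Perm (Fin (2*r-2)))) : ℤ)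
        = ((-1:ℤ))^(j.val) := by
      rw [sign_rot (by omega)]
      push_cast
      ring
    rw [hsgn]
    congr 1
    have hv0 : ((Equiv.addLeft j : Equiv.Perm (Fin (2*r-2))) ⟨0, by omega⟩).val = j.val := by
      simp only [Equiv.coe_addLeft]
      rw [Fin.add_def]
      show (j.val + 0) % (2*r-2) = j.val
      rw [Nat.add_zero, Nat.mod_eq_of_lt j.isLt]
    have hvl : clN r ((Equiv.addLeft j : Equiv.Perm (Fin (2*r-2))) ⟨2*r-2-1, by omega⟩).val
        = rwN r j.val := by
      simp only [Equiv.coe_addLeft]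
      rw [Fin.add_def]
      show clN r ((j.val + (2*r-2-1)) % (2*r-2)) = rwN r j.val
      rw [cyc h1 (Nat.mod_lt _ (by omega)), Nat.mod_add_mod,
        show j.val + (2*r-2-1) + 1 = j.val + (2*r-2) from by omega,
        Nat.add_mod_right, Nat.mod_eq_of_lt j.isLt]
    have hcg : ∀ (a b a' b' : Fin n), a = a' → b = b' →
        Matrix.single a b (1:k) = Matrix.single a' b' 1 := by
      rintro a b a' b' rfl rfl; rfl
    exact hcg _ _ _ _ (Fin.ext (by simp only [hpairF]; rw [hv0]))
      (Fin.ext (by simp only [hpairF]; rw [hvl]))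
  refine Eq.trans (Finset.sum_congr rfl fun j _ => hterm j) ?_
  refine Eq.trans (Fin.sum_univ_eq_sum_range (fun v => ((-1:ℤ))^v • Matrix.single
    (⟨rwN r v % n, Nat.mod_lt _ hn⟩ : Fin n)
    (⟨rwN r v % n, Nat.mod_lt _ hn⟩ : Fin n) (1:k)) (2*r-2)) ?_
  exact final_sum k h1 h2

theorem stmt_9 (k : Type*) [Field k] (h2k : (2 : k) ≠ 0) (n r : ℕ)
    (h1 : 1 < r) (h2 : r ≤ n) :
    stdEval (2 * r - 2) (unitSeq k n r h1 h2) =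
        Matrix.single (⟨0, by omega⟩ : Fin n) ⟨0, by omega⟩ (1 : k) -
          Matrix.single ⟨r - 1, by omega⟩ ⟨r - 1, by omega⟩ 1 ∧
      Polynomial.rootMultiplicity 1
        (Matrix.charpoly
          (Matrix.single (⟨0, by omega⟩ : Fin n) ⟨0, by omega⟩ (1 : k) -
            Matrix.single ⟨r - 1, by omega⟩ ⟨r - 1, by omega⟩ 1)) = 1 := by
  exact ⟨part1 k r n h1 h2, part2 k h2k h1 h2⟩
end

section
/- Let $k$ be an infinite field, $m=n^2-1$, and let $Y$ be the $n\times n$ matrix with entries $\Delta(X_1,\dots,X_m,e_{ji})$ in the polynomial ring $k[x_{pq}^{(h)}]$, where $X_1,\dots,X_m$ are generic $n\times n$ matrices. Then the $n^2$ polynomials $\Delta(X_1,\dots,X_m,e_{ji})$, for $1\le i,j\le n$, are algebraically independent over $k$. -/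
/-- The discriminant of `n²` matrices of size `n × n`: the determinant of the
`n² × n²` matrix whose `i`-th row consists of the entries of the `i`-th matrix. -/
def disc {k : Type*} [CommRing k] {n : ℕ}
    (A : Fin (n * n) → Matrix (Fin n) (Fin n) k) : k :=
  Matrix.det (Matrix.of fun i j : Fin (n * n) =>
    A i (finProdFinEquiv.symm j).1 (finProdFinEquiv.symm j).2)

/-- Append the matrix `Z` to the family `A_1, …, A_{n²-1}` to get `n²` matrices. -/
def appendZ {k : Type*} [CommRing k] {n : ℕ}
    (A : Fin (n * n - 1) → Matrix (Fin n) (Fin n) k)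
    (Z : Matrix (Fin n) (Fin n) k) : Fin (n * n) → Matrix (Fin n) (Fin n) k :=
  fun t => if h : (t : ℕ) < n * n - 1 then A ⟨t, h⟩ else Z

/-- The `h`-th generic `n × n` matrix, whose entries are the indeterminates
`x_{pq}^{(h)}` of the polynomial ring. -/
noncomputable def genericMatrix (k : Type*) [CommRing k] (n : ℕ) (h : Fin (n * n - 1)) :
    Matrix (Fin n) (Fin n) (MvPolynomial (Fin (n * n - 1) × Fin n × Fin n) k) :=
  Matrix.of fun p q => MvPolynomial.X (h, p, q)

/-- Determinant of the special specialized matrix: rows `r < N-1` are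
`d r • e_r + w r • e_l`, the last row is `e_c`; the determinant is exactly `s c`. -/
lemma det_special {K : Type*} [Field K] {N : ℕ} (hN : 2 ≤ N) (s : Fin N → K)
    (hs : ∀ j, s j ≠ 0) (l z : Fin N) (hl : (l : ℕ) = N - 1) (hz : (z : ℕ) = 0)
    (c : Fin N) :
    (Matrix.of fun r j : Fin N =>
      if (r : ℕ) < N - 1 then
        (if j = r then (if r = z then s l else 1) else
          if j = l then (if r = z then -(s z) else -(s r / s l)) else 0)
      else if j = c then 1 else 0).det = s c := by
  classical
  set M : Matrix (Fin N) (Fin N) K := Matrix.of fun r j : Fin N =>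
      if (r : ℕ) < N - 1 then
        (if j = r then (if r = z then s l else 1) else
          if j = l then (if r = z then -(s z) else -(s r / s l)) else 0)
      else if j = c then 1 else 0 with hM
  have hlz : l ≠ z := by
    intro h; rw [Fin.ext_iff, hl, hz] at h; omega
  have hlt : ∀ r : Fin N, (r : ℕ) < N - 1 ↔ r ≠ l := by
    intro r
    constructor
    · intro h hr; rw [hr, hl] at h; omega
    · intro h
      have := r.isLt
      rcases Nat.lt_or_ge (r : ℕ) (N - 1) with h' | h'
      · exact h'
      · exfalso; exact h (Fin.ext (by omega))
  -- entries
  have hrow_ne : ∀ r j : Fin N, r ≠ l → M r j =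
      (if j = r then (if r = z then s l else 1) else
        if j = l then (if r = z then -(s z) else -(s r / s l)) else 0) := by
    intro r j hr
    rw [hM]
    simp only [Matrix.of_apply, if_pos ((hlt r).2 hr)]
  have hrow_l : ∀ j : Fin N, M l j = if j = c then 1 else 0 := by
    intro j
    rw [hM]
    simp only [Matrix.of_apply]
    rw [if_neg]
    rw [hl]; omega
  rw [Matrix.det_apply]
  rw [Finset.sum_eq_single (Equiv.swap c l)]
  · -- value of the single term
    rcases eq_or_ne c l with rfl | hcl
    · rw [Equiv.swap_self]
      have hsign : Equiv.Perm.sign (Equiv.refl (Fin N) : Equiv.Perm (Fin N)) = 1 := by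
        simp
      rw [hsign, one_smul]
      have hdiag : ∀ i : Fin N, M ((Equiv.refl (Fin N)) i) i = if i = z then s c else 1 := by
        intro i
        rcases eq_or_ne i c with rfl | hic
        · rw [Equiv.refl_apply, hrow_l, if_pos rfl, if_neg hlz]
        · rw [Equiv.refl_apply, hrow_ne i i hic, if_pos rfl]
      rw [Finset.prod_congr rfl (fun i _ => hdiag i), Finset.prod_ite_eq' Finset.univ z
        (fun _ => s c), if_pos (Finset.mem_univ z)]
    · have hsign := Equiv.Perm.sign_swap hcl
      rw [hsign]
      have hswapc : Equiv.swap c l c = l := Equiv.swap_apply_left c l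
      have hswapl : Equiv.swap c l l = c := Equiv.swap_apply_right c l
      have hlm : l ∈ Finset.univ.erase c := Finset.mem_erase.2 ⟨Ne.symm hcl, Finset.mem_univ l⟩
      rw [← Finset.mul_prod_erase Finset.univ _ (Finset.mem_univ c),
        ← Finset.mul_prod_erase _ _ hlm]
      have h1 : M (Equiv.swap c l c) c = 1 := by
        rw [hswapc, hrow_l, if_pos rfl]
      have h2 : M (Equiv.swap c l l) l = if c = z then -(s z) else -(s c / s l) := by
        rw [hswapl, hrow_ne c l hcl, if_neg (Ne.symm hcl), if_pos rfl]
      have h3 : ∏ i ∈ (Finset.univ.erase c).erase l, M (Equiv.swap c l i) i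
          = if c = z then 1 else s l := by
        have hterm : ∀ i ∈ (Finset.univ.erase c).erase l, M (Equiv.swap c l i) i
            = if i = z then s l else 1 := by
          intro i hi
          have h' := Finset.mem_erase.1 hi
          have hil := h'.1
          have hic := (Finset.mem_erase.1 h'.2).1
          rw [Equiv.swap_apply_of_ne_of_ne hic hil, hrow_ne i i hil, if_pos rfl]
        rw [Finset.prod_congr rfl hterm, Finset.prod_ite_eq' _ z (fun _ => s l)]
        have hmem : z ∈ (Finset.univ.erase c).erase l ↔ ¬ (c = z) := by
          constructor
          · intro h hcz
            exact (Finset.mem_erase.1 (Finset.mem_erase.1 h).2).1 hcz.symm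
          · intro hcz
            exact Finset.mem_erase.2 ⟨Ne.symm hlz, Finset.mem_erase.2
              ⟨fun h => hcz h.symm, Finset.mem_univ z⟩⟩
        rcases eq_or_ne c z with rfl | hcz
        · rw [if_neg (fun h => (hmem.1 h) rfl), if_pos rfl]
        · rw [if_pos (hmem.2 hcz), if_neg hcz]
      rw [h1, h2, h3, one_mul]
      rcases eq_or_ne c z with rfl | hcz
      · simp [Units.smul_def]
      · rw [if_neg hcz, if_neg hcz]
        have : -(s c / s l) * s l = -(s c) := by
          rw [neg_mul, div_mul_cancel₀ _ (hs l)]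
        rw [this]
        simp [Units.smul_def]
  · -- other permutations contribute 0
    intro π _ hπ
    rcases eq_or_ne (∏ i, M (π i) i) 0 with h0 | h0
    · rw [h0, smul_zero]
    · exfalso
      apply hπ
      have hne : ∀ i : Fin N, M (π i) i ≠ 0 := by
        intro i
        exact Finset.prod_ne_zero_iff.mp h0 i (Finset.mem_univ i)
      have hfix : ∀ i : Fin N, i ≠ c → i ≠ l → π i = i := by
        intro i hic hil
        have h := hne i
        by_contra hne2
        rcases eq_or_ne (π i) l with hpl | hpl
        · rw [hpl, hrow_l, if_neg hic] at h
          exact h rfl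
        · rw [hrow_ne _ _ hpl, if_neg (fun hh => hne2 hh.symm), if_neg hil] at h
          exact h rfl
      have hπl : π l = c := by
        rcases eq_or_ne c l with rfl | hcl
        · -- c = l : show π c = c
          by_contra h
          have h2 := hfix (π c) h h
          exact h (π.injective h2)
        · have h1 : π l ≠ l := by
            intro h
            have := hne l
            rw [h, hrow_l, if_neg (Ne.symm hcl)] at this
            exact this rfl
          by_contra h2
          have h3 := hfix (π l) h2 h1
          exact h1 (π.injective h3)
      refine Equiv.ext fun i => ?_
      rcases eq_or_ne i l with rfl | hil
      · rw [hπl, Equiv.swap_apply_right]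
      · rcases eq_or_ne i c with rfl | hic
        · -- i = c ≠ l
          rw [Equiv.swap_apply_left]
          have hc1 : π i ≠ i := by
            intro h
            exact (Ne.symm hil) (π.injective (hπl.trans h.symm))
          by_contra h2
          have h3 := hfix (π i) hc1 h2
          exact hc1 (π.injective h3)
        · rw [Equiv.swap_apply_of_ne_of_ne hic hil, hfix i hic hil]
  · intro h
    exact absurd (Finset.mem_univ _) h

theorem stmt_11 (k : Type*) [Field k] [Infinite k] (n : ℕ) (hn : 2 ≤ n) :
    AlgebraicIndependent k (fun ij : Fin n × Fin n =>
      disc (appendZ (genericMatrix k n)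
        (Matrix.single ij.2 ij.1
          (1 : MvPolynomial (Fin (n * n - 1) × Fin n × Fin n) k)))) := by
  classical
  have hN : 2 ≤ n * n := le_trans hn (Nat.le_mul_of_pos_left n (by omega))
  set R := MvPolynomial (Fin n × Fin n) k with hR
  let K := FractionRing R
  let l : Fin (n * n) := ⟨n * n - 1, by omega⟩
  let z : Fin (n * n) := ⟨0, by omega⟩
  let s : Fin (n * n) → K := fun j =>
    algebraMap R K (MvPolynomial.X ((finProdFinEquiv.symm j).2, (finProdFinEquiv.symm j).1))
  have hinj : Function.Injective (algebraMap R K) := IsFractionRing.injective R K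
  have hs : ∀ j, s j ≠ 0 := by
    intro j h
    have : (MvPolynomial.X ((finProdFinEquiv.symm j).2, (finProdFinEquiv.symm j).1) : R) = 0 :=
      hinj (by rw [map_zero]; exact h)
    exact MvPolynomial.X_ne_zero _ this
  let rowf : Fin (n * n) → Fin (n * n) → K := fun r j =>
    if j = r then (if r = z then s l else 1) else
      if j = l then (if r = z then -(s z) else -(s r / s l)) else 0
  let σ : MvPolynomial (Fin (n * n - 1) × Fin n × Fin n) k →ₐ[k] K :=
    MvPolynomial.aeval (fun x : Fin (n * n - 1) × Fin n × Fin n =>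
      rowf ⟨(x.1 : ℕ), by omega⟩ (finProdFinEquiv (x.2.1, x.2.2)))
  apply AlgebraicIndependent.of_comp σ
  have key : (⇑σ ∘ fun ij : Fin n × Fin n =>
      disc (appendZ (genericMatrix k n)
        (Matrix.single ij.2 ij.1
          (1 : MvPolynomial (Fin (n * n - 1) × Fin n × Fin n) k))))
      = fun ij : Fin n × Fin n => algebraMap R K (MvPolynomial.X ij) := by
    funext ij
    set c : Fin (n * n) := finProdFinEquiv (ij.2, ij.1) with hc
    show σ (disc _) = _
    unfold disc
    rw [show σ (Matrix.det _) = _ from σ.toRingHom.map_det _]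
    have hmat : σ.toRingHom.mapMatrix (Matrix.of fun i j : Fin (n * n) =>
        (appendZ (genericMatrix k n)
          (Matrix.single ij.2 ij.1
            (1 : MvPolynomial (Fin (n * n - 1) × Fin n × Fin n) k))) i
          (finProdFinEquiv.symm j).1 (finProdFinEquiv.symm j).2)
        = Matrix.of fun r j : Fin (n * n) =>
            if (r : ℕ) < n * n - 1 then
              (if j = r then (if r = z then s l else 1) else
                if j = l then (if r = z then -(s z) else -(s r / s l)) else 0)
            else if j = c then 1 else 0 := by
      ext r j
      rw [RingHom.mapMatrix_apply, Matrix.map_apply, Matrix.of_apply, Matrix.of_apply]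
      unfold appendZ
      by_cases hr : (r : ℕ) < n * n - 1
      · rw [dif_pos hr, if_pos hr]
        show σ (genericMatrix k n ⟨r, hr⟩ _ _) = _
        unfold genericMatrix
        rw [Matrix.of_apply]
        show σ (MvPolynomial.X (⟨(r : ℕ), hr⟩, (finProdFinEquiv.symm j).1,
          (finProdFinEquiv.symm j).2)) = _
        rw [MvPolynomial.aeval_X]
        have h1 : ((finProdFinEquiv.symm j).1, (finProdFinEquiv.symm j).2)
            = finProdFinEquiv.symm j := rfl
        have h2 : (⟨((⟨(r : ℕ), hr⟩ : Fin (n * n - 1)) : ℕ), by omega⟩ : Fin (n * n)) = r :=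
          Fin.ext rfl
        show rowf _ (finProdFinEquiv ((finProdFinEquiv.symm j).1, (finProdFinEquiv.symm j).2)) = _
        rw [h1, h2, Equiv.apply_symm_apply]
      · rw [dif_neg hr, if_neg hr]
        show σ (Matrix.single ij.2 ij.1 1 _ _) = _
        rw [Matrix.single]
        have hcond : (ij.2 = (finProdFinEquiv.symm j).1 ∧ ij.1 = (finProdFinEquiv.symm j).2)
            ↔ j = c := by
          constructor
          · rintro ⟨h1, h2⟩
            rw [hc]
            rw [← Equiv.apply_symm_apply finProdFinEquiv j]
            congr 1
            exact Prod.ext h1.symm h2.symm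
          · intro h
            rw [hc] at h
            have : finProdFinEquiv.symm j = (ij.2, ij.1) := by
              rw [h, Equiv.symm_apply_apply]
            rw [this]
            exact ⟨rfl, rfl⟩
        rw [Matrix.of_apply]
        by_cases h : j = c
        · rw [if_pos (hcond.2 h), map_one, if_pos h]
        · rw [if_neg (fun hh => h (hcond.1 hh)), map_zero, if_neg h]
    rw [hmat, det_special hN s hs l z rfl rfl c]
    show algebraMap R K (MvPolynomial.X ((finProdFinEquiv.symm c).2,
      (finProdFinEquiv.symm c).1)) = _
    rw [hc, Equiv.symm_apply_apply]
  rw [key]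
  exact (MvPolynomial.algebraicIndependent_X (Fin n × Fin n) k).map'
    (f := IsScalarTower.toAlgHom k R K) hinj
end

section
/- Let $m,N$ be integers with $2\le m\le N-2$, $N=N_1+N_2$ with $N_1,N_2\ge1$, and $m=m_1+m_2$ with $0\le m_i\le N_i$. If $(N-m-1)(m-1)-1 = \sum_{i=1}^2 (N_i-m_i)m_i - \max_i N_i$ fails to be a strict inequality $\ge$, i.e. equality holds in $(N-m)m-\sum_i (N_i-m_i)m_i \ge N-\max_i N_i$, then $N_1=N_2=2$ and $m_1=m_2=1$ (hence $N=4$, $m=2$). -/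
/-!
Write `lᵢ = Nᵢ - mᵢ`. The defect `(N - m) m - ∑ lᵢ mᵢ` is the cross term `l₁ m₂ + l₂ m₁`, and
`N - max Nᵢ = min Nᵢ`, so equality says `l₁ m₂ + l₂ m₁ = min (l₁ + m₁) (l₂ + m₂)`. Since
`m, l ≥ 2`, a vanishing `mᵢ` or `lᵢ` would force the cross term to vanish, contradicting
`Nᵢ ≥ 1`; once all four are positive, `l₁ m₂ ≥ l₁` and `l₂ m₁ ≥ m₁` make the bound by
`l₁ + m₁` an equality only when `m₂ = l₂ = 1`, and symmetrically.
-/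

namespace CrossTerm

variable {l₁ m₁ l₂ m₂ : ℕ}

theorem pos_of_le_add (hle : l₁ * m₂ + l₂ * m₁ ≤ l₁ + m₁) (hpos : 0 < l₁ * m₂ + l₂ * m₁)
    (hm : 2 ≤ m₁ + m₂) (hl : 2 ≤ l₁ + l₂) : 0 < l₁ ∧ 0 < m₁ := by
  constructor
  · by_contra! h
    obtain rfl : l₁ = 0 := by omega
    have : 2 * m₁ ≤ l₂ * m₁ := Nat.mul_le_mul_right m₁ (by omega)
    simp only [zero_mul, zero_add] at hle hpos
    omega
  · by_contra! h
    obtain rfl : m₁ = 0 := by omega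
    have : l₁ * 2 ≤ l₁ * m₂ := Nat.mul_le_mul_left l₁ (by omega)
    simp only [mul_zero, add_zero] at hle hpos
    omega

theorem eq_one_of_le_add (hl₁ : 0 < l₁) (hm₁ : 0 < m₁) (hl₂ : 0 < l₂) (hm₂ : 0 < m₂)
    (hle : l₁ * m₂ + l₂ * m₁ ≤ l₁ + m₁) : l₂ = 1 ∧ m₂ = 1 := by
  have h₁ : l₁ * 1 ≤ l₁ * m₂ := Nat.mul_le_mul_left l₁ hm₂
  have h₂ : 1 * m₁ ≤ l₂ * m₁ := Nat.mul_le_mul_right m₁ hl₂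
  constructor
  · by_contra! h
    have : 2 * m₁ ≤ l₂ * m₁ := Nat.mul_le_mul_right m₁ (by omega)
    omega
  · by_contra! h
    have : l₁ * 2 ≤ l₁ * m₂ := Nat.mul_le_mul_left l₁ (by omega)
    omega

theorem eq_one_of_eq_min (h : l₁ * m₂ + l₂ * m₁ = min (l₁ + m₁) (l₂ + m₂))
    (hpos : 0 < min (l₁ + m₁) (l₂ + m₂)) (hm : 2 ≤ m₁ + m₂) (hl : 2 ≤ l₁ + l₂) :
    l₁ = 1 ∧ m₁ = 1 ∧ l₂ = 1 ∧ m₂ = 1 := by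
  have hle₁ : l₁ * m₂ + l₂ * m₁ ≤ l₁ + m₁ := h ▸ min_le_left _ _
  have hle₂ : l₂ * m₁ + l₁ * m₂ ≤ l₂ + m₂ := add_comm (l₁ * m₂) _ ▸ h ▸ min_le_right _ _
  obtain ⟨hl₁, hm₁⟩ := pos_of_le_add hle₁ (h ▸ hpos) hm hl
  obtain ⟨hl₂, hm₂⟩ := pos_of_le_add hle₂ (by omega) (by omega) (by omega)
  obtain ⟨rfl, rfl⟩ := eq_one_of_le_add hl₁ hm₁ hl₂ hm₂ hle₁
  obtain ⟨rfl, rfl⟩ := eq_one_of_le_add hl₂ hm₂ hl₁ hm₁ hle₂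
  exact ⟨rfl, rfl, rfl, rfl⟩

end CrossTerm

theorem stmt_18 (N m N₁ N₂ m₁ m₂ : ℕ)
    (h2 : 2 ≤ m) (h3 : m + 2 ≤ N)
    (hN : N = N₁ + N₂) (hN₁ : 1 ≤ N₁) (hN₂ : 1 ≤ N₂)
    (hm : m = m₁ + m₂) (hm₁ : m₁ ≤ N₁) (hm₂ : m₂ ≤ N₂)
    (heq : ((N : ℤ) - m) * m - (((N₁ : ℤ) - m₁) * m₁ + ((N₂ : ℤ) - m₂) * m₂) =
      (N : ℤ) - max (N₁ : ℤ) (N₂ : ℤ)) :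
    N₁ = 2 ∧ N₂ = 2 ∧ m₁ = 1 ∧ m₂ = 1 := by
  obtain ⟨l₁, rfl⟩ := Nat.exists_eq_add_of_le' hm₁
  obtain ⟨l₂, rfl⟩ := Nat.exists_eq_add_of_le' hm₂
  subst hN hm
  have hcross : l₁ * m₂ + l₂ * m₁ = min (l₁ + m₁) (l₂ + m₂) := by
    have hminmax := min_add_max ((l₁ + m₁ : ℕ) : ℤ) (l₂ + m₂)
    have : ((l₁ * m₂ + l₂ * m₁ : ℕ) : ℤ) = (min (l₁ + m₁) (l₂ + m₂) : ℕ) := by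
      push_cast at heq hminmax ⊢
      linear_combination heq - hminmax
    exact_mod_cast this
  obtain ⟨rfl, rfl, rfl, rfl⟩ :=
    CrossTerm.eq_one_of_eq_min hcross (by omega) h2 (by omega)
  exact ⟨rfl, rfl, rfl, rfl⟩
end
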